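/- Let H be a real Hilbert space, L : H × H → ℝ ∪ {+∞} an anti-selfdual Lagrangian, and λ > 0. Then the λ-regularization L_λ(x,p) = inf_{z∈H} { L(z,p) + ‖x−z‖²/(2λ) } + (λ/2)‖p‖² is again an anti-selfdual Lagrangian on H × H. -/

import Mathlib

/-!
Conjugating the inf-convolution in `x` produces `(λ/2)‖q‖²`, so that
`L_λ*(q,y) = (λ/2)‖q‖² + sup_{z,p} {⟨q,z⟩ + ⟨y,p⟩ − (λ/2)‖p‖² − L(z,p)}`, while anti-selfduality
rewrites `L_λ(−y,−q)` as `(λ/2)‖q‖² + inf_r {L*(q,r) + ‖y−r‖²/(2λ)}`. The supremum is at most the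
infimum by Fenchel–Young. Conversely, the function being maximised is `λ`-strongly concave in `p`,
so the `p`-components of a maximising sequence are Cauchy, and for their limit `p̄` the choice
`r = y − λp̄` brings the infimum down to the supremum.
-/

open scoped RealInnerProductSpace NNReal

noncomputable section

/-- Convexity for `EReal`-valued functions. -/
def ERealConvexOn {E : Type*} [AddCommGroup E] [Module ℝ E] (f : E → EReal) : Prop :=
  ∀ x y : E, ∀ s t : ℝ, 0 ≤ s → 0 ≤ t → s + t = 1 →
    f (s • x + t • y) ≤ (s : EReal) * f x + (t : EReal) * f y

/-- The Legendre–Fenchel dual, in both variables, of a Lagrangian on `H × H`. -/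
def lagrangianDualH {H : Type*} [NormedAddCommGroup H] [InnerProductSpace ℝ H]
    (L : H × H → EReal) (q y : H) : EReal :=
  ⨆ x : H, ⨆ p : H, ((⟪q, x⟫ + ⟪y, p⟫ : ℝ) : EReal) - L (x, p)

/-- A Lagrangian on a Hilbert space is anti-selfdual if `L*(p,x) = L(−x,−p)`. -/
def IsASDH {H : Type*} [NormedAddCommGroup H] [InnerProductSpace ℝ H]
    (L : H × H → EReal) : Prop :=
  ∀ p x : H, lagrangianDualH L p x = L (-x, -p)

/-- `(q,y) ∈ ∂L(x,p)`, the subdifferential of the Lagrangian `L` at `(x,p)`. -/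
def MemSubdiff {H : Type*} [NormedAddCommGroup H] [InnerProductSpace ℝ H]
    (L : H × H → EReal) (x p q y : H) : Prop :=
  ∀ z r : H, L (x, p) + ((⟪q, z - x⟫ + ⟪y, r - p⟫ : ℝ) : EReal) ≤ L (z, r)

/-- `y ∈ ∂₂L(u,v)`, the subdifferential in the second variable. -/
def MemSubdiff2 {H : Type*} [NormedAddCommGroup H] [InnerProductSpace ℝ H]
    (L : H × H → EReal) (u v y : H) : Prop :=
  ∀ r : H, L (u, v) + ((⟪y, r - v⟫ : ℝ) : EReal) ≤ L (u, r)

/-- `q ∈ ∂₁L(x,p)`, the subdifferential in the first variable. -/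
def MemSubdiff1 {H : Type*} [NormedAddCommGroup H] [InnerProductSpace ℝ H]
    (L : H × H → EReal) (x p q : H) : Prop :=
  ∀ z : H, L (x, p) + ((⟪q, z - x⟫ : ℝ) : EReal) ≤ L (z, p)

/-- The `λ`-regularization of a Lagrangian:
`L_λ(x,p) = inf_z { L(z,p) + ‖x−z‖²/(2λ) } + (λ/2)‖p‖²`. -/
def lagReg {H : Type*} [NormedAddCommGroup H] [InnerProductSpace ℝ H]
    (lam : ℝ) (L : H × H → EReal) (x p : H) : EReal :=
  (⨅ z : H, L (z, p) + ((‖x - z‖ ^ 2 / (2 * lam) : ℝ) : EReal))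
    + ((lam / 2 * ‖p‖ ^ 2 : ℝ) : EReal)


open Filter Topology Set

namespace EReal

def addCoeOrderIso (c : ℝ) : EReal ≃o EReal where
  toFun x := x + c
  invFun x := x - c
  left_inv _ := EReal.add_sub_cancel_right
  right_inv _ := EReal.sub_add_cancel
  map_rel_iff' := (addLECancellable_coe c).add_le_add_iff_right

lemma coe_add_iSup {ι : Sort*} (c : ℝ) (g : ι → EReal) :
    (c : EReal) + ⨆ i, g i = ⨆ i, ((c : EReal) + g i) := by
  simp only [add_comm (c : EReal)]
  exact (addCoeOrderIso c).map_iSup g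

lemma coe_sub_iInf {ι : Sort*} (c : ℝ) (g : ι → EReal) :
    (c : EReal) - ⨅ i, g i = ⨆ i, ((c : EReal) - g i) := by
  have neg_iInf : -(⨅ i, g i) = ⨆ i, -g i := negOrderIso.map_iInf g
  rw [sub_eq_add_neg, neg_iInf, coe_add_iSup]
  rfl

lemma coe_sub_add_coe (a b : ℝ) (x : EReal) :
    (a : EReal) - (x + b) = ((a - b : ℝ) : EReal) - x := by
  induction x using EReal.rec with
  | bot => rfl
  | coe r => norm_cast; ring
  | top => simp

lemma coe_add_coe_sub (a b : ℝ) (x : EReal) :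
    ((a + b : ℝ) : EReal) - x = (a : EReal) + ((b : EReal) - x) := by
  induction x using EReal.rec with
  | bot => simp
  | coe r => norm_cast; ring
  | top => simp

lemma eq_coe_sub_of_coe_sub_eq {a u : ℝ} {x : EReal} (h : (a : EReal) - x = u) :
    x = ((a - u : ℝ) : EReal) := by
  induction x using EReal.rec with
  | bot => simp at h
  | coe r => norm_cast at h ⊢; linarith
  | top => simp at h

lemma coe_sub_ne_bot {a : ℝ} {x : EReal} (hx : x ≠ ⊤) : (a : EReal) - x ≠ ⊥ := by
  induction x using EReal.rec with
  | bot => simp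
  | coe r => exact (EReal.coe_sub a r) ▸ EReal.coe_ne_bot _
  | top => exact absurd rfl hx

lemma iSup_coe_sub_of_le {ι : Sort*} {g : ι → ℝ} {i₀ : ι} (h : ∀ i, g i ≤ g i₀) (x : EReal) :
    ⨆ i, ((g i : EReal) - x) = (g i₀ : EReal) - x :=
  le_antisymm (iSup_le fun i => sub_le_sub (by exact_mod_cast h i) le_rfl)
    (le_iSup (fun i => (g i : EReal) - x) i₀)

end EReal

section InnerProductSpace

variable {H : Type*} [NormedAddCommGroup H] [InnerProductSpace ℝ H]

lemma real_inner_le_mul_sq_add_sq_div {lam : ℝ} (hlam : 0 < lam) (a b : H) :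
    ⟪a, b⟫ ≤ lam / 2 * ‖a‖ ^ 2 + ‖b‖ ^ 2 / (2 * lam) := by
  have hab := real_inner_le_norm a b
  have key : 2 * lam * (‖a‖ * ‖b‖) ≤ lam ^ 2 * ‖a‖ ^ 2 + ‖b‖ ^ 2 := by
    nlinarith [sq_nonneg (lam * ‖a‖ - ‖b‖)]
  have : ‖a‖ * ‖b‖ ≤ lam / 2 * ‖a‖ ^ 2 + ‖b‖ ^ 2 / (2 * lam) := by
    rw [show lam / 2 * ‖a‖ ^ 2 + ‖b‖ ^ 2 / (2 * lam) = (lam ^ 2 * ‖a‖ ^ 2 + ‖b‖ ^ 2) / (2 * lam) by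
      field_simp, le_div_iff₀ (by positivity)]
    linarith
  linarith

lemma norm_smul_add_smul_sq {s t : ℝ} (h : s + t = 1) (u v : H) :
    ‖s • u + t • v‖ ^ 2 = s * ‖u‖ ^ 2 + t * ‖v‖ ^ 2 - s * t * ‖u - v‖ ^ 2 := by
  obtain rfl : t = 1 - s := by linarith
  rw [norm_add_sq_real, norm_sub_sq_real, real_inner_smul_left, real_inner_smul_right,
    norm_smul, norm_smul, Real.norm_eq_abs, Real.norm_eq_abs, mul_pow, mul_pow, sq_abs, sq_abs]
  ring

end InnerProductSpace

lemma exists_seq_coe_lt_of_iSup_eq_coe {X : Type*} {g : X → EReal} {M : ℝ}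
    (hM : ⨆ a, g a = M) :
    ∃ (a : ℕ → X) (u : ℕ → ℝ), (∀ n, g (a n) = u n) ∧ ∀ n, M - 1 / (n + 1) < u n := by
  have h : ∀ n : ℕ, ∃ (a : X) (u : ℝ), g a = u ∧ M - 1 / (n + 1) < u := by
    intro n
    have hlt : ((M - 1 / (n + 1) : ℝ) : EReal) < ⨆ a, g a := by
      rw [hM, EReal.coe_lt_coe_iff]
      linarith [Nat.one_div_pos_of_nat (α := ℝ) (n := n)]
    obtain ⟨a, ha⟩ := lt_iSup_iff.mp hlt
    have hle : g a ≤ M := hM ▸ le_iSup g a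
    have hfin := EReal.coe_toReal (hle.trans_lt (EReal.coe_lt_top M)).ne ha.ne_bot
    exact ⟨a, (g a).toReal, hfin.symm, EReal.coe_lt_coe_iff.1 (hfin.symm ▸ ha)⟩
  choose a u hau hu using h
  exact ⟨a, u, hau, hu⟩

section StrongConcavity

variable {X H : Type*} [AddCommGroup X] [Module ℝ X] [NormedAddCommGroup H]

/-- `κ`-strong concavity of `g` in the direction `π`, imposed only between points where `g` is
finite. -/
def StrongConcaveAlong (κ : ℝ) (π : X → H) (g : X → EReal) : Prop :=
  ∀ a b : X, ∀ u v t : ℝ, g a = u → g b = v → 0 ≤ t → t ≤ 1 →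
    (((1 - t) * u + t * v + κ / 2 * ((1 - t) * t * ‖π a - π b‖ ^ 2) : ℝ) : EReal)
      ≤ g ((1 - t) • a + t • b)

namespace StrongConcaveAlong

variable {κ M : ℝ} {π : X → H} {g : X → EReal}

lemma add_sq_le (hg : StrongConcaveAlong κ π g) (hM : ⨆ a, g a = M) {a b : X} {u v t : ℝ}
    (ha : g a = u) (hb : g b = v) (ht₀ : 0 ≤ t) (ht₁ : t ≤ 1) :
    (1 - t) * u + t * v + κ / 2 * ((1 - t) * t * ‖π a - π b‖ ^ 2) ≤ M := by
  have := (hg a b u v t ha hb ht₀ ht₁).trans (hM ▸ le_iSup g _)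
  exact_mod_cast this

variable {a : ℕ → X} {u : ℕ → ℝ}

lemma cauchySeq (hg : StrongConcaveAlong κ π g) (hκ : 0 < κ) (hM : ⨆ a, g a = M)
    (hau : ∀ n, g (a n) = u n) (hu : ∀ n, M - 1 / (n + 1) < u n) :
    CauchySeq fun n => π (a n) := by
  refine cauchySeq_of_le_tendsto_0 (fun N : ℕ => √(8 / κ * (1 / (N + 1)))) ?_ ?_
  · intro n m N hn hm
    have hmid := hg.add_sq_le hM (hau n) (hau m) (t := 1 / 2) (by norm_num) (by norm_num)
    have hεn : 1 / ((n : ℝ) + 1) ≤ 1 / (N + 1) := by gcongr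
    have hεm : 1 / ((m : ℝ) + 1) ≤ 1 / (N + 1) := by gcongr
    rw [dist_eq_norm, Real.le_sqrt (norm_nonneg _) (by positivity), mul_comm, mul_div_assoc',
      le_div_iff₀ hκ]
    linarith [hu n, hu m]
  · simpa using ((tendsto_one_div_add_atTop_nhds_zero_nat.const_mul (8 / κ)).sqrt)

lemma le_sub_sq_of_tendsto (hg : StrongConcaveAlong κ π g) (hM : ⨆ a, g a = M)
    (hau : ∀ n, g (a n) = u n) (hu : ∀ n, M - 1 / (n + 1) < u n) {c : H}
    (hc : Tendsto (fun n => π (a n)) atTop (𝓝 c)) (b : X) :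
    g b ≤ ((M - κ / 2 * ‖π b - c‖ ^ 2 : ℝ) : EReal) := by
  cases hv : g b using EReal.rec with
  | bot => exact bot_le
  | top => exact absurd (hM ▸ le_iSup g b) (by simp [hv])
  | coe v =>
    have hstep : ∀ t ∈ Ioo (0 : ℝ) 1, v + κ / 2 * ((1 - t) * ‖c - π b‖ ^ 2) ≤ M := by
      rintro t ⟨ht₀, ht₁⟩
      have hn : ∀ n : ℕ, t * (v + κ / 2 * ((1 - t) * ‖π (a n) - π b‖ ^ 2))
          ≤ t * M + (1 - t) * (1 / (n + 1)) := by
        intro n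
        have hcomb := hg.add_sq_le hM (hau n) hv ht₀.le ht₁.le
        have hun := mul_le_mul_of_nonneg_left (hu n).le (sub_nonneg.2 ht₁.le)
        linarith
      have hlim := le_of_tendsto_of_tendsto'
        (((by fun_prop : Continuous fun p : H => t * (v + κ / 2 * ((1 - t) * ‖p - π b‖ ^ 2))).tendsto
          c).comp hc)
        ((tendsto_one_div_add_atTop_nhds_zero_nat.const_mul (1 - t)).const_add (t * M)) hn
      rw [mul_zero, add_zero] at hlim
      exact le_of_mul_le_mul_left hlim ht₀
    have hlim : Tendsto (fun t : ℝ => v + κ / 2 * ((1 - t) * ‖c - π b‖ ^ 2)) (𝓝[>] 0)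
        (𝓝 (v + κ / 2 * ((1 - 0) * ‖c - π b‖ ^ 2))) :=
      ((by fun_prop : Continuous fun t : ℝ => v + κ / 2 * ((1 - t) * ‖c - π b‖ ^ 2)).tendsto
        0).mono_left nhdsWithin_le_nhds
    have hle := le_of_tendsto hlim (eventually_of_mem (Ioo_mem_nhdsGT one_pos) hstep)
    rw [sub_zero, one_mul, norm_sub_rev] at hle
    exact EReal.coe_le_coe_iff.2 (by linarith)

theorem exists_le_sub_sq [CompleteSpace H] (hg : StrongConcaveAlong κ π g) (hκ : 0 < κ)
    (hM : ⨆ a, g a = M) : ∃ c : H, ∀ b, g b ≤ ((M - κ / 2 * ‖π b - c‖ ^ 2 : ℝ) : EReal) := by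
  obtain ⟨a, u, hau, hu⟩ := exists_seq_coe_lt_of_iSup_eq_coe hM
  obtain ⟨c, hc⟩ := cauchySeq_tendsto_of_complete (hg.cauchySeq hκ hM hau hu)
  exact ⟨c, hg.le_sub_sq_of_tendsto hM hau hu hc⟩

end StrongConcaveAlong

end StrongConcavity

section Lagrangian

variable {H : Type*} [NormedAddCommGroup H] [InnerProductSpace ℝ H] {L : H × H → EReal} {lam : ℝ}

lemma strongConcaveAlong_snd (hconv : ERealConvexOn L) (q y : H) :
    StrongConcaveAlong lam Prod.snd
      fun w : H × H => ((⟪q, w.1⟫ + ⟪y, w.2⟫ - lam / 2 * ‖w.2‖ ^ 2 : ℝ) : EReal) - L w := by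
  rintro ⟨z, p⟩ ⟨z', p'⟩ u v t ha hb ht₀ ht₁
  have hLa := EReal.eq_coe_sub_of_coe_sub_eq ha
  have hLb := EReal.eq_coe_sub_of_coe_sub_eq hb
  have hL := hconv (z, p) (z', p') (1 - t) t (by linarith) ht₀ (by ring)
  rw [hLa, hLb, ← EReal.coe_mul, ← EReal.coe_mul, ← EReal.coe_add] at hL
  refine le_trans ?_ (EReal.sub_le_sub le_rfl hL)
  rw [← EReal.coe_sub, EReal.coe_le_coe_iff]
  simp only [Prod.smul_mk, Prod.mk_add_mk, inner_add_right, real_inner_smul_right,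
    norm_smul_add_smul_sq (sub_add_cancel 1 t)]
  exact le_of_eq (by ring)

lemma iSup_sub_le_lagrangianDualH_add (hlam : 0 < lam) (q y r : H) :
    ⨆ w : H × H, ((⟪q, w.1⟫ + ⟪y, w.2⟫ - lam / 2 * ‖w.2‖ ^ 2 : ℝ) : EReal) - L w
      ≤ lagrangianDualH L q r + ((‖y - r‖ ^ 2 / (2 * lam) : ℝ) : EReal) := by
  refine iSup_le fun w => ?_
  have hw : ((⟪q, w.1⟫ + ⟪r, w.2⟫ : ℝ) : EReal) - L w ≤ lagrangianDualH L q r :=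
    le_iSup₂_of_le (f := fun x p => ((⟪q, x⟫ + ⟪r, p⟫ : ℝ) : EReal) - L (x, p)) w.1 w.2 le_rfl
  refine le_trans ?_ (add_le_add hw le_rfl)
  rw [add_comm (_ - L w), ← EReal.coe_add_coe_sub]
  refine EReal.sub_le_sub (EReal.coe_le_coe_iff.2 ?_) le_rfl
  have := real_inner_le_mul_sq_add_sq_div hlam w.2 (y - r)
  rw [real_inner_comm, inner_sub_left] at this
  linarith

lemma iInf_lagrangianDualH_add_le {q y c : H} {s : ℝ} (hlam : 0 < lam)
    (hc : ∀ w : H × H, ((⟪q, w.1⟫ + ⟪y, w.2⟫ - lam / 2 * ‖w.2‖ ^ 2 : ℝ) : EReal) - L w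
      ≤ ((s - lam / 2 * ‖w.2 - c‖ ^ 2 : ℝ) : EReal)) :
    ⨅ r, lagrangianDualH L q r + ((‖y - r‖ ^ 2 / (2 * lam) : ℝ) : EReal) ≤ s := by
  have hdual : lagrangianDualH L q (y - lam • c) ≤ ((s - lam / 2 * ‖c‖ ^ 2 : ℝ) : EReal) := by
    refine iSup₂_le fun z p => ?_
    calc ((⟪q, z⟫ + ⟪y - lam • c, p⟫ : ℝ) : EReal) - L (z, p)
        = ((lam / 2 * ‖p‖ ^ 2 - lam * ⟪c, p⟫ : ℝ) : EReal)
            + (((⟪q, z⟫ + ⟪y, p⟫ - lam / 2 * ‖p‖ ^ 2 : ℝ) : EReal) - L (z, p)) := by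
          rw [← EReal.coe_add_coe_sub, inner_sub_left, real_inner_smul_left]
          ring_nf
      _ ≤ ((lam / 2 * ‖p‖ ^ 2 - lam * ⟪c, p⟫ : ℝ) : EReal)
            + ((s - lam / 2 * ‖p - c‖ ^ 2 : ℝ) : EReal) := add_le_add le_rfl (hc (z, p))
      _ = ((s - lam / 2 * ‖c‖ ^ 2 : ℝ) : EReal) := by
          rw [← EReal.coe_add, norm_sub_sq_real, real_inner_comm]
          ring_nf
  have hnorm : ‖y - (y - lam • c)‖ ^ 2 / (2 * lam) = lam / 2 * ‖c‖ ^ 2 := by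
    rw [sub_sub_cancel, norm_smul, Real.norm_eq_abs, mul_pow, sq_abs]
    field_simp
  calc ⨅ r, lagrangianDualH L q r + ((‖y - r‖ ^ 2 / (2 * lam) : ℝ) : EReal)
      ≤ lagrangianDualH L q (y - lam • c)
          + ((‖y - (y - lam • c)‖ ^ 2 / (2 * lam) : ℝ) : EReal) := iInf_le _ _
    _ ≤ ((s - lam / 2 * ‖c‖ ^ 2 : ℝ) : EReal) + ((lam / 2 * ‖c‖ ^ 2 : ℝ) : EReal) := by
        rw [hnorm]
        exact add_le_add hdual le_rfl
    _ = s := by rw [← EReal.coe_add, sub_add_cancel]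

theorem iSup_sub_eq_iInf_lagrangianDualH_add [CompleteSpace H] (hconv : ERealConvexOn L)
    (hproper : ∃ w, L w ≠ ⊤) (hlam : 0 < lam) (q y : H) :
    ⨆ w : H × H, ((⟪q, w.1⟫ + ⟪y, w.2⟫ - lam / 2 * ‖w.2‖ ^ 2 : ℝ) : EReal) - L w
      = ⨅ r, lagrangianDualH L q r + ((‖y - r‖ ^ 2 / (2 * lam) : ℝ) : EReal) := by
  refine le_antisymm (le_iInf (iSup_sub_le_lagrangianDualH_add hlam q y)) ?_
  cases hS : ⨆ w : H × H, ((⟪q, w.1⟫ + ⟪y, w.2⟫ - lam / 2 * ‖w.2‖ ^ 2 : ℝ) : EReal) - L w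
      using EReal.rec with
  | top => exact le_top
  | bot =>
    obtain ⟨w, hw⟩ := hproper
    have hle := hS ▸ le_iSup (fun w : H × H =>
      ((⟪q, w.1⟫ + ⟪y, w.2⟫ - lam / 2 * ‖w.2‖ ^ 2 : ℝ) : EReal) - L w) w
    exact absurd (le_bot_iff.1 hle) (EReal.coe_sub_ne_bot hw)
  | coe s =>
    obtain ⟨c, hc⟩ := (strongConcaveAlong_snd hconv q y).exists_le_sub_sq hlam hS
    exact iInf_lagrangianDualH_add_le hlam hc

lemma lagrangianDualH_lagReg (hlam : 0 < lam) (q y : H) :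
    lagrangianDualH (fun w : H × H => lagReg lam L w.1 w.2) q y
      = ((lam / 2 * ‖q‖ ^ 2 : ℝ) : EReal)
        + ⨆ w : H × H, ((⟪q, w.1⟫ + ⟪y, w.2⟫ - lam / 2 * ‖w.2‖ ^ 2 : ℝ) : EReal) - L w := by
  set F : H → H → H → EReal := fun x p z =>
    ((⟪q, x⟫ + ⟪y, p⟫ - lam / 2 * ‖p‖ ^ 2 - ‖x - z‖ ^ 2 / (2 * lam) : ℝ) : EReal) - L (z, p)
  have hx (x p : H) : ((⟪q, x⟫ + ⟪y, p⟫ : ℝ) : EReal) - lagReg lam L x p = ⨆ z, F x p z := by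
    rw [lagReg, EReal.coe_sub_add_coe, EReal.coe_sub_iInf]
    exact iSup_congr fun z => EReal.coe_sub_add_coe _ _ _
  have hz (z p : H) : ⨆ x, F x p z = ((lam / 2 * ‖q‖ ^ 2 : ℝ) : EReal)
      + (((⟪q, z⟫ + ⟪y, p⟫ - lam / 2 * ‖p‖ ^ 2 : ℝ) : EReal) - L (z, p)) := by
    have hmax : ⟪q, z + lam • q⟫ + ⟪y, p⟫ - lam / 2 * ‖p‖ ^ 2 - ‖z + lam • q - z‖ ^ 2 / (2 * lam)
        = lam / 2 * ‖q‖ ^ 2 + (⟪q, z⟫ + ⟪y, p⟫ - lam / 2 * ‖p‖ ^ 2) := by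
      rw [inner_add_right, real_inner_smul_right, real_inner_self_eq_norm_sq, add_sub_cancel_left,
        norm_smul, Real.norm_eq_abs, mul_pow, sq_abs]
      field_simp
      ring
    rw [EReal.iSup_coe_sub_of_le (i₀ := z + lam • q), hmax, EReal.coe_add_coe_sub]
    intro x
    rw [hmax]
    have := real_inner_le_mul_sq_add_sq_div hlam q (x - z)
    rw [inner_sub_right] at this
    linarith
  calc lagrangianDualH (fun w : H × H => lagReg lam L w.1 w.2) q y
      = ⨆ x, ⨆ p, ⨆ z, F x p z := by simp only [lagrangianDualH, hx]
    _ = ⨆ p, ⨆ z, ⨆ x, F x p z := by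
      rw [iSup_comm]
      exact iSup_congr fun p => iSup_comm
    _ = _ := by
      simp only [hz, iSup_prod (f := fun w : H × H => _ - L w), EReal.coe_add_iSup]
      exact iSup_comm

lemma lagReg_neg_neg (hASD : IsASDH L) (lam : ℝ) (q y : H) :
    lagReg lam L (-y) (-q)
      = (⨅ r, lagrangianDualH L q r + ((‖y - r‖ ^ 2 / (2 * lam) : ℝ) : EReal))
        + ((lam / 2 * ‖q‖ ^ 2 : ℝ) : EReal) := by
  rw [lagReg, norm_neg, ← (Equiv.neg H).iInf_comp]
  congr 1
  refine iInf_congr fun r => ?_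
  rw [Equiv.neg_apply, hASD q r, ← norm_neg (y - r), neg_sub', sub_neg_eq_add]

end Lagrangian

theorem stmt9_general {H : Type*} [NormedAddCommGroup H] [InnerProductSpace ℝ H] [CompleteSpace H]
    (L : H × H → EReal)
    (hconv : ERealConvexOn L)
    (hproper : ∃ z, L z ≠ ⊤)
    (hASD : IsASDH L)
    (lam : ℝ) (hlam : 0 < lam) :
    IsASDH (fun zp : H × H => lagReg lam L zp.1 zp.2) := by
  intro q y
  show _ = lagReg lam L (-y) (-q)
  rw [lagrangianDualH_lagReg hlam, lagReg_neg_neg hASD,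
    ← iSup_sub_eq_iInf_lagrangianDualH_add hconv hproper hlam, add_comm]

/-- the `λ`-regularization of an anti-selfdual Lagrangian is anti-selfdual. -/
theorem stmt9 {H : Type*} [NormedAddCommGroup H] [InnerProductSpace ℝ H] [CompleteSpace H]
    (L : H × H → EReal)
    (hconv : ERealConvexOn L)
    (hlsc : LowerSemicontinuous L)
    (hproper : ∃ z, L z ≠ ⊤) (hreal : ∀ z, L z ≠ ⊥)
    (hASD : IsASDH L)
    (lam : ℝ) (hlam : 0 < lam) :
    IsASDH (fun zp : H × H => lagReg lam L zp.1 zp.2) :=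
  stmt9_general L hconv hproper hASD lam hlam
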